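/- arXiv:2603.29233 — 6 statements merged into one kernel-verified Lean document; each statement's English description precedes it below -/
import Mathlib

section
/- For any threshold t with 1 <= t <= b, and any day d >= 1, the threshold cost satisfies C_t(d) <= (1 + (b-1)/t) * min(d, b). That is, the threshold-t algorithm is (1 + (b-1)/t)-competitive pointwise when t <= b. -/
/-- For `1 ≤ t ≤ b`, the threshold-`t` algorithm is `(1 + (b-1)/t)`-competitive
pointwise: `C_t(d) · t ≤ (t + b - 1) · min(d, b)` for all `d ≥ 1`. -/
theorem threshold_competitive_early (b t : ℕ) (hb : 1 ≤ b) (ht : 1 ≤ t) (htb : t ≤ b)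
    (C : ℕ → ℕ) (hC : ∀ d, C d = if d < t then d else b + t - 1) :
    ∀ d : ℕ, 1 ≤ d → C d * t ≤ (t + b - 1) * min d b := by
  intro d hd
  rw [hC]
  split_ifs with h
  · have hmin : min d b = d := min_eq_left (le_of_lt (lt_of_lt_of_le h htb))
    rw [hmin, mul_comm]
    exact Nat.mul_le_mul_right d (by omega)
  · have hmin : t ≤ min d b := le_min (by omega) htb
    calc (b + t - 1) * t = (t + b - 1) * t := by ring_nf
      _ ≤ (t + b - 1) * min d b := Nat.mul_le_mul_left _ hmin
end

section
/- If a threshold t lies in the interval [λb, b/λ] for some λ in (0,1), then the pointwise competitive ratio of the threshold-t algorithm is at most 1 + 1/λ - 1/b; that is, C_t(d) <= (1 + 1/λ - 1/b) * min(d, b) for all d >= 1. -/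
/-- If the threshold `t` lies in `[λb, b/λ]` for some `λ ∈ (0,1)`, then the pointwise
competitive ratio of the threshold-`t` algorithm is at most `1 + 1/λ - 1/b`:
`C_t(d) ≤ (1 + 1/λ - 1/b) · min(d, b)` for all `d ≥ 1`. -/
theorem clamp_robustness (b lam t : ℝ) (hb : 1 ≤ b) (hlam0 : 0 < lam) (hlam1 : lam < 1)
    (ht1 : lam * b ≤ t) (ht2 : t ≤ b / lam) :
    ∀ d : ℝ, 1 ≤ d →
      (if d < t then d else b + t - 1) ≤ (1 + 1 / lam - 1 / b) * min d b := by
  intro d hd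
  have hb0 : (0:ℝ) < b := by linarith
  have hpos : (0:ℝ) < lam * b := mul_pos hlam0 hb0
  have ht2' : lam * t ≤ b := (le_div_iff₀ hlam0).mp ht2 |>.trans_eq (by ring) |> (fun h => by nlinarith)
  have hrho : (1 + 1 / lam - 1 / b) = (lam * b + b - lam) / (lam * b) := by
    field_simp
  rw [hrho]
  have key : ∀ x : ℝ, 0 < x → lam * b * (if d < t then d else b + t - 1) ≤ (lam * b + b - lam) * x →
      (if d < t then d else b + t - 1) ≤ (lam * b + b - lam) / (lam * b) * x := by
    intro x hx h
    rw [div_mul_eq_mul_div, le_div_iff₀ hpos]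
    nlinarith
  rcases le_total d b with hdb | hdb
  · rw [min_eq_left hdb]
    apply key d (by linarith)
    split_ifs with h
    · nlinarith
    · push_neg at h
      nlinarith
  · rw [min_eq_right hdb]
    apply key b hb0
    split_ifs with h
    · have : d < b / lam := lt_of_lt_of_le h ht2
      rw [lt_div_iff₀ hlam0] at this
      nlinarith
    · nlinarith
end

section
/- Let p be a probability mass function on positive integers with finite support, and let t* <= b. Define S(t) = Σ_{d >= t} p(d), f(t*) = Σ_{d < t*} p(d)·d + S(t*)·(b + t* - 1), and OPT(p) = Σ_{d < b} p(d)·d + b·S(b). If S(b) > 0, then with r = S(t*)/S(b), the expected competitive ratio satisfies f(t*)/OPT(p) <= 1 + ((b-1)r - (b - t*))/(t*·r + (b - t*)). -/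
open scoped BigOperators

set_option maxHeartbeats 800000 in
/-- Expected competitive ratio bound for the early-buy regime `t* ≤ b`:
`f(t*)/OPT(p) ≤ 1 + ((b-1)r - (b - t*)) / (t*·r + (b - t*))` with `r = S(t*)/S(b)`. -/
theorem ecr_early_buy (b tstar : ℕ) (hb : 1 ≤ b) (ht : 1 ≤ tstar) (htb : tstar ≤ b)
    (p : ℕ → ℝ) (hfin : (Function.support p).Finite)
    (hpos : ∀ d, p d ≠ 0 → 1 ≤ d) (hnn : ∀ d, 0 ≤ p d) (hsum : ∑' d, p d = 1)
    (S : ℕ → ℝ) (hS : ∀ t, S t = ∑' d, if t ≤ d then p d else 0)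
    (f OPT r : ℝ)
    (hf : f = (∑' d, if d < tstar then p d * d else 0) + S tstar * ((b : ℝ) + tstar - 1))
    (hOPT : OPT = (∑' d, if d < b then p d * d else 0) + (b : ℝ) * S b)
    (hSb : 0 < S b) (hr : r = S tstar / S b) :
    f / OPT ≤ 1 + (((b : ℝ) - 1) * r - ((b : ℝ) - tstar)) /
      ((tstar : ℝ) * r + ((b : ℝ) - tstar)) := by
  classical
  set s := hfin.toFinset with hs
  have hsupp : ∀ d, d ∉ s → p d = 0 := by
    intro d hd
    by_contra h
    exact hd (hfin.mem_toFinset.mpr h)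
  have hSt' : S tstar = ∑ d ∈ s, (if tstar ≤ d then p d else 0) := by
    rw [hS]
    exact tsum_eq_sum (fun d hd => by simp [hsupp d hd])
  have hSb' : S b = ∑ d ∈ s, (if b ≤ d then p d else 0) := by
    rw [hS]
    exact tsum_eq_sum (fun d hd => by simp [hsupp d hd])
  have hA' : (∑' d, if d < tstar then p d * d else 0)
      = ∑ d ∈ s, (if d < tstar then p d * d else 0) :=
    tsum_eq_sum (fun d hd => by simp [hsupp d hd])
  have hAb' : (∑' d, if d < b then p d * d else 0)
      = ∑ d ∈ s, (if d < b then p d * d else 0) :=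
    tsum_eq_sum (fun d hd => by simp [hsupp d hd])
  set A : ℝ := ∑ d ∈ s, (if d < tstar then p d * d else 0) with hAdef
  set M : ℝ := ∑ d ∈ s, (if tstar ≤ d ∧ d < b then p d else 0) with hMdef
  set B : ℝ := ∑ d ∈ s, (if tstar ≤ d ∧ d < b then p d * d else 0) with hBdef
  -- S tstar = S b + M
  have hStM : S tstar = S b + M := by
    rw [hSt', hSb', hMdef, ← Finset.sum_add_distrib]
    refine Finset.sum_congr rfl (fun d _ => ?_)
    split_ifs <;> first | ring1 | (exfalso; omega)
  -- split of the sum below b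
  have hsplit : (∑ d ∈ s, (if d < b then p d * d else 0)) = A + B := by
    rw [hAdef, hBdef, ← Finset.sum_add_distrib]
    refine Finset.sum_congr rfl (fun d _ => ?_)
    split_ifs <;> first | ring1 | (exfalso; omega)
  -- nonnegativity
  have hAnn : 0 ≤ A :=
    Finset.sum_nonneg fun d _ => by
      split_ifs
      · exact mul_nonneg (hnn d) (Nat.cast_nonneg d)
      · exact le_refl 0
  have hMnn : 0 ≤ M :=
    Finset.sum_nonneg fun d _ => by split_ifs <;> [exact hnn d; exact le_refl 0]
  have hBM : (tstar : ℝ) * M ≤ B := by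
    rw [hMdef, hBdef, Finset.mul_sum]
    refine Finset.sum_le_sum fun d _ => ?_
    split_ifs with h
    · have hd : (tstar : ℝ) ≤ (d : ℝ) := by exact_mod_cast h.1
      nlinarith [hnn d]
    · simp
  have hStSb : S b ≤ S tstar := by rw [hStM]; linarith
  set N : ℝ := ((b : ℝ) + tstar - 1) * S tstar with hNdef
  set D : ℝ := (tstar : ℝ) * S tstar + ((b : ℝ) - tstar) * S b with hDdef
  have ht1 : (1 : ℝ) ≤ (tstar : ℝ) := by exact_mod_cast ht
  have htb' : (tstar : ℝ) ≤ (b : ℝ) := by exact_mod_cast htb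
  have hDpos : 0 < D := by
    have : (0:ℝ) ≤ ((b:ℝ) - tstar) * S b := mul_nonneg (by linarith) hSb.le
    nlinarith
  have hND : D ≤ N := by nlinarith
  have hOPTge : A + D ≤ OPT := by
    rw [hOPT, hAb', hsplit, hDdef, hStM]
    nlinarith
  have hOPTpos : 0 < OPT := lt_of_lt_of_le (by linarith) hOPTge
  -- rewrite the RHS as N / D
  have hSbne : S b ≠ 0 := ne_of_gt hSb
  have hDne : D ≠ 0 := ne_of_gt hDpos
  have hnum : ((b : ℝ) - 1) * r - ((b : ℝ) - tstar) = (N - D) / S b := by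
    rw [hr, hNdef, hDdef]; field_simp; ring
  have hden : (tstar : ℝ) * r + ((b : ℝ) - tstar) = D / S b := by
    rw [hr, hDdef]; field_simp
  have hRHS : 1 + (((b : ℝ) - 1) * r - ((b : ℝ) - tstar)) /
      ((tstar : ℝ) * r + ((b : ℝ) - tstar)) = N / D := by
    rw [hnum, hden]
    have h1 : (N - D) / S b / (D / S b) = (N - D) / D := by
      field_simp
    rw [h1]
    field_simp
    ring
  rw [hRHS]
  have hfAN : f = A + N := by rw [hf, hA', hNdef]; ring
  rw [div_le_div_iff₀ hOPTpos hDpos, hfAN]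
  nlinarith [mul_nonneg hAnn (sub_nonneg.mpr hND), mul_le_mul_of_nonneg_left hOPTge (by linarith : (0:ℝ) ≤ N)]
end

section
/- Let p be a probability mass function on positive integers with finite support, and let t* > b. With S(t) = Σ_{d >= t} p(d), f(t*) = Σ_{d < t*} p(d)·d + S(t*)·(b + t* - 1), OPT(p) = Σ_{d < b} p(d)·d + b·S(b), and assuming S(b) > 0, the expected competitive ratio satisfies f(t*)/OPT(p) <= (t* - 1)/b + S(t*)/S(b). -/
open scoped BigOperators

/-- Expected competitive ratio bound for the late-buy regime `t* > b`:
`f(t*)/OPT(p) ≤ (t* - 1)/b + S(t*)/S(b)`. -/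
theorem ecr_late_buy (b tstar : ℕ) (hb : 1 ≤ b) (ht : b + 1 ≤ tstar)
    (p : ℕ → ℝ) (hfin : (Function.support p).Finite)
    (hpos : ∀ d, p d ≠ 0 → 1 ≤ d) (hnn : ∀ d, 0 ≤ p d) (hsum : ∑' d, p d = 1)
    (S : ℕ → ℝ) (hS : ∀ t, S t = ∑' d, if t ≤ d then p d else 0)
    (f OPT : ℝ)
    (hf : f = (∑' d, if d < tstar then p d * d else 0) + S tstar * ((b : ℝ) + tstar - 1))
    (hOPT : OPT = (∑' d, if d < b then p d * d else 0) + (b : ℝ) * S b)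
    (hSb : 0 < S b) :
    f / OPT ≤ ((tstar : ℝ) - 1) / b + S tstar / S b := by
  classical
  set F := hfin.toFinset with hF
  have hzero : ∀ d, d ∉ F → p d = 0 := by
    intro d hd
    by_contra h
    exact hd (hfin.mem_toFinset.mpr h)
  have hts : ∀ (g : ℕ → ℝ), (∀ d, p d = 0 → g d = 0) → ∑' d, g d = ∑ d ∈ F, g d := by
    intro g hg
    exact tsum_eq_sum (fun d hd => hg d (hzero d hd))
  have hA : (∑' d, if d < tstar then p d * d else 0)
      = ∑ d ∈ F, (if d < tstar then p d * d else 0) := by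
    apply hts; intro d h; simp [h]
  have hB : (∑' d, if d < b then p d * d else 0)
      = ∑ d ∈ F, (if d < b then p d * d else 0) := by
    apply hts; intro d h; simp [h]
  have hSb' : S b = ∑ d ∈ F, (if b ≤ d then p d else 0) := by
    rw [hS]; apply hts; intro d h; simp [h]
  have hSt' : S tstar = ∑ d ∈ F, (if tstar ≤ d then p d else 0) := by
    rw [hS]; apply hts; intro d h; simp [h]
  set A := ∑ d ∈ F, (if d < tstar then p d * d else 0) with hAdef
  set B := ∑ d ∈ F, (if d < b then p d * d else 0) with hBdef
  set Sb := ∑ d ∈ F, (if b ≤ d then p d else 0) with hSbdef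
  set St := ∑ d ∈ F, (if tstar ≤ d then p d else 0) with hStdef
  have hB0 : 0 ≤ B := by
    apply Finset.sum_nonneg; intro d _
    by_cases h : d < b <;> simp [h]
    exact mul_nonneg (hnn d) (Nat.cast_nonneg d)
  have hSt0 : 0 ≤ St := by
    apply Finset.sum_nonneg; intro d _
    by_cases h : tstar ≤ d <;> simp [h, hnn d]
  have hSb0 : 0 < Sb := by rw [← hSb']; exact hSb
  have hb1 : (1 : ℝ) ≤ (b : ℝ) := by exact_mod_cast hb
  have hb0 : (0 : ℝ) < (b : ℝ) := lt_of_lt_of_le one_pos hb1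
  have hbt : (b : ℝ) + 1 ≤ (tstar : ℝ) := by exact_mod_cast ht
  -- key inequality
  have key : A + ((tstar : ℝ) - 1) * St ≤ B + ((tstar : ℝ) - 1) * Sb := by
    rw [hAdef, hBdef, hSbdef, hStdef, Finset.mul_sum, Finset.mul_sum,
      ← Finset.sum_add_distrib, ← Finset.sum_add_distrib]
    apply Finset.sum_le_sum
    intro d _
    rcases lt_or_ge d b with hdb | hdb
    · have h1 : d < tstar := lt_of_lt_of_le hdb (le_trans (Nat.le_succ b) ht)
      have h2 : ¬ tstar ≤ d := by omega
      have h3 : ¬ b ≤ d := by omega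
      simp [h1, hdb, h2, h3]
    · rcases lt_or_ge d tstar with hdt | hdt
      · have h2 : ¬ tstar ≤ d := by omega
        have h3 : ¬ d < b := by omega
        rw [if_pos hdt, if_neg h2, if_neg h3, if_pos hdb]
        have hd1 : (d : ℝ) ≤ (tstar : ℝ) - 1 := by
          have : (d : ℝ) + 1 ≤ (tstar : ℝ) := by exact_mod_cast hdt
          linarith
        nlinarith [hnn d, mul_le_mul_of_nonneg_left hd1 (hnn d)]
      · have h1 : ¬ d < tstar := by omega
        have h2 : tstar ≤ d := hdt
        have h3 : ¬ d < b := by omega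
        have h4 : b ≤ d := by omega
        simp [h1, h2, h3, h4]
  have hOPTpos : 0 < OPT := by
    rw [hOPT, hB, hSb']
    have : 0 < (b : ℝ) * Sb := mul_pos hb0 hSb0
    linarith
  have hrhs : ((tstar : ℝ) - 1) / b + S tstar / S b
      = (((tstar : ℝ) - 1) * Sb + (b : ℝ) * St) / ((b : ℝ) * Sb) := by
    rw [hSb', hSt']
    field_simp
  rw [hrhs, div_le_div_iff₀ hOPTpos (mul_pos hb0 hSb0)]
  rw [hf, hOPT, hA, hB, hSb', hSt']
  nlinarith [mul_le_mul_of_nonneg_right key (le_of_lt (mul_pos hb0 hSb0)),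
    mul_nonneg (mul_nonneg hB0 hSb0.le) (by linarith : (0:ℝ) ≤ (tstar:ℝ) - 1 - (b:ℝ)),
    mul_nonneg (mul_nonneg hB0 hSt0) hb0.le]
end

section
/- Tail robustness: if a stopping distribution f with finite support satisfies Σ_t (t-1)·f(t) <= (R-1)·b, then for every horizon x >= b, the expected cost E_{z~f}[C_z(x)] = μ(x) + (b-x)·F(x) + x is at most R·b. -/
open scoped BigOperators

/-- Tail robustness: if `Σ_t (t-1)·f(t) ≤ (R-1)·b`, then for every horizon `x ≥ b`,
the expected cost `μ(x) + (b - x)·F(x) + x` is at most `R·b`. -/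
theorem tail_robustness (b : ℕ) (hb : 1 ≤ b) (R : ℝ) (hR : 1 ≤ R)
    (f : ℕ → ℝ) (hfin : (Function.support f).Finite)
    (hpos : ∀ z, f z ≠ 0 → 1 ≤ z) (hnn : ∀ z, 0 ≤ f z) (hsum : ∑' z, f z = 1)
    (F mu : ℕ → ℝ)
    (hF : ∀ x, F x = ∑ t ∈ Finset.Icc 1 x, f t)
    (hmu : ∀ x, mu x = ∑ t ∈ Finset.Icc 1 x, ((t : ℝ) - 1) * f t)
    (htail : (∑' t : ℕ, ((t : ℝ) - 1) * f t) ≤ (R - 1) * b) :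
    ∀ x : ℕ, b ≤ x → mu x + ((b : ℝ) - x) * F x + x ≤ R * b := by
  intro x hx
  classical
  set S := hfin.toFinset with hS
  have hfS : ∀ t ∉ S, f t = 0 := by
    intro t ht; by_contra h; exact ht (hfin.mem_toFinset.mpr h)
  have hsumS : ∑ t ∈ S, f t = 1 := by
    rw [← hsum]; exact (tsum_eq_sum (fun t ht => hfS t ht)).symm
  set U := S ∪ Finset.Icc 1 x with hU
  have hIccU : Finset.Icc 1 x ⊆ U := Finset.subset_union_right
  have hSU : S ⊆ U := Finset.subset_union_left
  have key : mu x + ((b : ℝ) - x) * F x + x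
      = ∑ t ∈ U, ((if t ∈ Finset.Icc 1 x then ((t:ℝ) - 1 + b - x) else 0) * f t
          + x * f t) := by
    rw [Finset.sum_add_distrib]
    have h1 : ∑ t ∈ U, (if t ∈ Finset.Icc 1 x then ((t:ℝ) - 1 + b - x) else 0) * f t
        = ∑ t ∈ Finset.Icc 1 x, ((t:ℝ) - 1 + b - x) * f t := by
      rw [← Finset.sum_subset hIccU]
      · apply Finset.sum_congr rfl; intro t ht; rw [if_pos ht]
      · intro t _ ht; rw [if_neg ht, zero_mul]
    have h2 : ∑ t ∈ U, (x:ℝ) * f t = x := by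
      rw [← Finset.sum_subset hSU (fun t _ ht => by rw [hfS t ht, mul_zero])]
      rw [← Finset.mul_sum, hsumS, mul_one]
    rw [h1, h2, hmu, hF, Finset.mul_sum, ← Finset.sum_add_distrib]
    congr 1
    apply Finset.sum_congr rfl
    intro t _
    ring
  rw [key]
  have bound : ∑ t ∈ U, ((if t ∈ Finset.Icc 1 x then ((t:ℝ) - 1 + b - x) else 0) * f t
        + x * f t)
      ≤ ∑ t ∈ U, ((t:ℝ) - 1 + b) * f t := by
    apply Finset.sum_le_sum
    intro t _
    by_cases hft : f t = 0
    · simp [hft]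
    · split_ifs with h
      · rw [← add_mul]; apply le_of_eq; ring_nf
      · rw [zero_mul, zero_add]
        apply mul_le_mul_of_nonneg_right _ (hnn t)
        have h1t : 1 ≤ t := hpos t hft
        have hxt : x < t := by
          by_contra hc
          exact h (Finset.mem_Icc.mpr ⟨h1t, le_of_not_gt hc⟩)
        have hxt' : (x:ℝ) ≤ (t:ℝ) - 1 := by
          have h2 : x + 1 ≤ t := hxt
          have h3 := (Nat.cast_le (α := ℝ)).mpr h2
          push_cast at h3; linarith
        have hb0 : (0:ℝ) ≤ b := by positivity
        linarith
  refine bound.trans ?_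
  have hUS : ∑ t ∈ U, ((t:ℝ) - 1 + b) * f t = ∑ t ∈ S, ((t:ℝ) - 1 + b) * f t := by
    symm
    apply Finset.sum_subset hSU
    intro t _ ht; rw [hfS t ht, mul_zero]
  rw [hUS]
  have hT : ∑ t ∈ S, ((t:ℝ) - 1) * f t = ∑' t : ℕ, ((t:ℝ) - 1) * f t := by
    symm; apply tsum_eq_sum
    intro t ht; rw [hfS t ht, mul_zero]
  have hsplit : ∑ t ∈ S, ((t:ℝ) - 1 + b) * f t
      = ∑ t ∈ S, ((t:ℝ) - 1) * f t + b * ∑ t ∈ S, f t := by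
    rw [Finset.mul_sum, ← Finset.sum_add_distrib]
    apply Finset.sum_congr rfl; intro t _; ring
  rw [hsplit, hT, hsumS, mul_one]
  linarith
end

section
/- The geometric CDF saturates the robustness constraints: with F(x) = (R-1)·((b/(b-1))^x - 1), f(t) = F(t) - F(t-1), and μ(x) = Σ_{t=1}^x (t-1)·f(t), the identity μ(x) + (b - x)·F(x) = (R - 1)·x holds for every natural number x >= 0 (whenever F(x) <= 1). -/
open scoped BigOperators

/-- The geometric CDF saturates the robustness constraints:
with `F(x) = (R-1)·((b/(b-1))^x - 1)`, `f(t) = F(t) - F(t-1)`, and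
`μ(x) = Σ_{t=1}^x (t-1)·f(t)`, we have `μ(x) + (b - x)·F(x) = (R - 1)·x`
for every `x ≥ 0` with `F(x) ≤ 1`. -/
theorem geometric_cdf_tight (b : ℕ) (hb : 2 ≤ b) (R : ℝ) (hR : 1 < R)
    (F f mu : ℕ → ℝ)
    (hF : ∀ x, F x = (R - 1) * (((b : ℝ) / ((b : ℝ) - 1)) ^ x - 1))
    (hf : ∀ t : ℕ, f t = F t - F (t - 1))
    (hmu : ∀ x, mu x = ∑ t ∈ Finset.Icc 1 x, ((t : ℝ) - 1) * f t) :
    ∀ x : ℕ, F x ≤ 1 → mu x + ((b : ℝ) - x) * F x = (R - 1) * x := by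
  have hb1 : ((b : ℝ) - 1) ≠ 0 := by
    have : (2 : ℝ) ≤ (b : ℝ) := by exact_mod_cast hb
    linarith
  -- key recurrence: (b-1)·F(x+1) - b·F(x) = R - 1
  have key : ∀ x : ℕ, ((b : ℝ) - 1) * F (x + 1) - (b : ℝ) * F x = R - 1 := by
    intro x
    rw [hF (x + 1), hF x, pow_succ, div_pow]
    have hbpow : ((b : ℝ) - 1) ^ x ≠ 0 := pow_ne_zero _ hb1
    field_simp
    ring
  have main : ∀ x : ℕ, mu x + ((b : ℝ) - x) * F x = (R - 1) * x := by
    intro x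
    induction x with
    | zero =>
      simp [hmu 0, hF 0]
    | succ n ih =>
      have hsum : mu (n + 1) = mu n + ((n : ℝ) + 1 - 1) * f (n + 1) := by
        rw [hmu (n + 1), hmu n, Finset.sum_Icc_succ_top (Nat.le_add_left 1 n)]
        push_cast
        ring
      have hfn : f (n + 1) = F (n + 1) - F n := by
        rw [hf (n + 1)]
        simp
      have hk := key n
      rw [hsum, hfn]
      push_cast
      nlinarith [ih, hk]
  exact fun x _ => main x
end
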